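/- arXiv:2311.02906 — 8 statements merged into one kernel-verified Lean document; each statement's English description precedes it below -/
import Mathlib

section
/- Let X be a set, f : X → X a map, and Y ⊆ X a subset with f(Y) ⊆ Y. Then the following are equivalent: (1) there exists s₀ ≥ 0 such that for all s ≥ s₀, f⁻ˢ⁻¹(Y) \ f⁻ˢ(Y) = ∅; (2) there exists n ≥ 1 and s₀ ≥ 0 such that for all s ≥ s₀, (fⁿ)⁻ˢ⁻¹(Y) \ (fⁿ)⁻ˢ(Y) = ∅; (3) there exists s₀ ≥ 0 such that for every x ∈ X, if fˢ(x) ∈ Y for some s ≥ 0, then f^{s₀}(x) ∈ Y. -/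
/-!
Since `Y` is invariant, the sets `f^[s] ⁻¹' Y` increase with `s`, so (1) says they are eventually
constant, and (3) says the constant value is reached at `s₀`, i.e. it is the union of all of them.
For (2) → (3), a point entering `Y` at time `s` is in `Y` at every multiple `n * t ≥ s`, and the
stabilization of the preimages under `f^[n]` brings `n * t` back down to `n * s₀`.
-/

open Function Set

section Preimages

variable {X : Type*} {f : X → X} {Y : Set X}

theorem Set.MapsTo.iterate_preimage_mono (hY : MapsTo f Y Y) :
    Monotone fun s => f^[s] ⁻¹' Y := by
  intro s t hst x hx
  have hsplit : f^[t] x = f^[t - s] (f^[s] x) := by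
    rw [← iterate_add_apply, Nat.sub_add_cancel hst]
  simpa only [mem_preimage, hsplit] using hY.iterate (t - s) hx

theorem iterate_preimage_subset_of_stable (g : X → X) {s₀ : ℕ}
    (h : ∀ s ≥ s₀, g^[s + 1] ⁻¹' Y \ g^[s] ⁻¹' Y = ∅) {s : ℕ} (hs : s₀ ≤ s) :
    g^[s] ⁻¹' Y ⊆ g^[s₀] ⁻¹' Y := by
  induction s, hs using Nat.le_induction with
  | base => exact subset_rfl
  | succ s hs ih => exact (sdiff_eq_empty.mp (h s hs)).trans ih

theorem Set.MapsTo.uniform_entry_of_stable_iterate (hY : MapsTo f Y Y) {n : ℕ} (hn : 1 ≤ n)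
    {s₀ : ℕ} (h : ∀ s ≥ s₀, (f^[n])^[s + 1] ⁻¹' Y \ (f^[n])^[s] ⁻¹' Y = ∅) {x : X} {s : ℕ}
    (hx : f^[s] x ∈ Y) : f^[n * s₀] x ∈ Y := by
  have hlate : f^[n * (s₀ + s)] x ∈ Y :=
    hY.iterate_preimage_mono ((Nat.le_add_left s s₀).trans (Nat.le_mul_of_pos_left _ hn)) hx
  rw [iterate_mul] at hlate ⊢
  exact iterate_preimage_subset_of_stable (f^[n]) h (Nat.le_add_right s₀ s) hlate

theorem Set.MapsTo.preimage_stable_of_uniform_entry (hY : MapsTo f Y Y) {s₀ : ℕ}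
    (h : ∀ x : X, (∃ s : ℕ, f^[s] x ∈ Y) → f^[s₀] x ∈ Y) :
    ∀ s ≥ s₀, f^[s + 1] ⁻¹' Y \ f^[s] ⁻¹' Y = ∅ :=
  fun s hs => sdiff_eq_empty.mpr fun x hx => hY.iterate_preimage_mono hs (h x ⟨s + 1, hx⟩)

end Preimages

/-- **Preimages Question, elementary equivalences.**
For a self-map `f` on a set `X` and an `f`-invariant subset `Y ⊆ X`, the following are
equivalent: (1) the iterated preimages of `Y` stabilize; (2) they stabilize for some
iterate `fⁿ` (`n ≥ 1`); (3) there is a uniform `s₀` such that any point eventually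
entering `Y` is already in `Y` after `s₀` steps. -/
theorem preimages_question_tfae {X : Type*} (f : X → X) (Y : Set X)
    (hY : Set.MapsTo f Y Y) :
    List.TFAE [
      ∃ s₀ : ℕ, ∀ s ≥ s₀, f^[s + 1] ⁻¹' Y \ f^[s] ⁻¹' Y = ∅,
      ∃ n : ℕ, 1 ≤ n ∧ ∃ s₀ : ℕ, ∀ s ≥ s₀, (f^[n])^[s + 1] ⁻¹' Y \ (f^[n])^[s] ⁻¹' Y = ∅,
      ∃ s₀ : ℕ, ∀ x : X, (∃ s : ℕ, f^[s] x ∈ Y) → f^[s₀] x ∈ Y] := by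
  tfae_have 1 → 2
  | ⟨s₀, h⟩ => ⟨1, le_rfl, s₀, by simpa only [iterate_one] using h⟩
  tfae_have 2 → 3
  | ⟨n, hn, s₀, h⟩ => ⟨n * s₀, fun _ ⟨_, hx⟩ => hY.uniform_entry_of_stable_iterate hn h hx⟩
  tfae_have 3 → 1
  | ⟨s₀, h⟩ => ⟨s₀, hY.preimage_stable_of_uniform_entry h⟩
  tfae_finish
end

section
/- Let V be a finite-dimensional vector space over ℚ. There exists n₀ ∈ ℤ≥1 depending only on dim V with the following property: for any ℚ-linear automorphism f : V → V and any subspace W ⊆ V which is f-periodic (meaning fⁿ(W) = W for some n ≥ 1), we have f^{n₀}(W) = W. -/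
/-!
If `fⁿ(W) = W`, then `W` is stable under every polynomial in `fⁿ`, so it suffices to find `N`,
depending only on `d`, with `f ^ N ∈ ℚ[fⁿ]`, i.e. `X ^ N ≡ Q(Xⁿ)` modulo the minimal polynomial
`p` of `f`. Over a splitting field, `X ↦ Xⁿ` is étale at every root `λ ≠ 0`, so `Q(Xⁿ)` can match
`X ^ N` to any order at `λ`. Roots with the same `n`-th power must be matched simultaneously,
which is possible as soon as they also have the same `N`-th power. Their ratio is a root of unity
of degree at most `d²` over `ℚ`, so its order `k` satisfies `φ(k) ≤ d²`, and `N = ((d² + 1) d²)!`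
is a multiple of every such `k`. The local solutions are glued by the Chinese remainder theorem
and brought down to `ℚ` by applying a `ℚ`-linear retraction `K → ℚ` to the coefficients.
-/

open Polynomial Nat

theorem Nat.dvd_factorial_of_totient_le {k D : ℕ} (hk : 0 < k) (h : φ k ≤ D) :
    k ∣ ((D + 1) * D)! := by
  rw [← Nat.factorization_prime_le_iff_dvd hk.ne' (Nat.factorial_pos _).ne']
  intro p hp
  set v := k.factorization p
  rcases Nat.eq_zero_or_pos v with hv | hv
  · simp [v, hv]
  have htot : p ^ (v - 1) * (p - 1) ≤ D := by
    rw [← Nat.totient_prime_pow hp hv]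
    exact (Nat.le_of_dvd (Nat.totient_pos.mpr hk)
      (Nat.totient_dvd_of_dvd (Nat.ordProj_dvd k p))).trans h
  have hp1 : 0 < p - 1 := by have := hp.two_le; omega
  have hpow : p ^ v ≤ (D + 1) * D := calc
    p ^ v = p * p ^ (v - 1) := by rw [← pow_succ']; congr 1; omega
    _ ≤ (D + 1) * D := Nat.mul_le_mul
        (by have := (Nat.le_mul_of_pos_left (p - 1) (pow_pos hp.pos (v - 1))).trans htot; omega)
        ((Nat.le_mul_of_pos_right _ hp1).trans htot)
  exact (hp.pow_dvd_iff_le_factorization (Nat.factorial_pos _).ne').mp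
    (Nat.dvd_factorial (pow_pos hp.pos v) hpow)

theorem IsOfFinOrder.pow_factorial_eq_one {K : Type*} [Field K] [CharZero K] {ζ : K}
    (hζ : IsOfFinOrder ζ) {D : ℕ} (hD : (minpoly ℚ ζ).natDegree ≤ D) :
    ζ ^ ((D + 1) * D)! = 1 := by
  have hk := hζ.orderOf_pos
  rw [← cyclotomic_eq_minpoly_rat (IsPrimitiveRoot.orderOf ζ) hk, natDegree_cyclotomic] at hD
  exact orderOf_dvd_iff_pow_eq_one.mp (Nat.dvd_factorial_of_totient_le hk hD)

theorem minpoly.natDegree_mul_inv_le {F K : Type*} [Field F] [Field K] [Algebra F K] {x y : K}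
    (hx : IsIntegral F x) (hy : IsIntegral F y) :
    (minpoly F (x * y⁻¹)).natDegree ≤ (minpoly F x).natDegree * (minpoly F y).natDegree := by
  open IntermediateField in
  set E := F⟮x⟯ ⊔ F⟮y⟯
  have := adjoin.finiteDimensional hx
  have := adjoin.finiteDimensional hy
  have hmem : x * y⁻¹ ∈ E := mul_mem (le_sup_left (a := F⟮x⟯) (mem_adjoin_simple_self F x))
    (inv_mem (le_sup_right (a := F⟮x⟯) (mem_adjoin_simple_self F y)))
  calc (minpoly F (x * y⁻¹)).natDegree = (minpoly F (⟨_, hmem⟩ : E)).natDegree := by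
        rw [IntermediateField.minpoly_eq]
    _ ≤ Module.finrank F E := minpoly.natDegree_le _
    _ ≤ _ := by
      rw [← adjoin.finrank hx, ← adjoin.finrank hy]
      exact finrank_sup_le _ _

namespace Polynomial

section LocalSolutions

variable {K : Type*} [Field K] {m : ℕ}

theorem rootMultiplicity_expand_of_ne_zero (hm : (m : K) ≠ 0) {a : K} (ha : a ≠ 0) (A : K[X]) :
    (expand K m A).rootMultiplicity a = A.rootMultiplicity (a ^ m) := by
  classical
  obtain rfl | hA := eq_or_ne A 0
  · simp
  obtain ⟨B, hB, hBa⟩ := A.exists_eq_pow_rootMultiplicity_mul_and_not_dvd hA (a ^ m)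
  set s := A.rootMultiplicity (a ^ m)
  have hsep := separable_X_pow_sub_C (a ^ m) hm (pow_ne_zero m ha)
  have hsimple : (X ^ m - C (a ^ m)).rootMultiplicity a = 1 :=
    le_antisymm (rootMultiplicity_le_one_of_separable hsep a)
      ((rootMultiplicity_pos hsep.ne_zero).mpr (by simp))
  have hBa' : ¬ (expand K m B).IsRoot a := by
    rwa [IsRoot, expand_eval, ← IsRoot, ← dvd_iff_isRoot]
  have hne : expand K m A ≠ 0 :=
    (expand_ne_zero (Nat.pos_of_ne_zero (by rintro rfl; simp at hm))).mpr hA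
  rw [hB, map_mul, map_pow, map_sub, expand_X, expand_C] at hne ⊢
  rw [rootMultiplicity_mul hne, ← count_roots, roots_pow, Multiset.count_nsmul, count_roots,
    hsimple, mul_one, rootMultiplicity_eq_zero hBa', add_zero]

theorem eq_zero_of_X_sub_C_pow_dvd_expand (hm : (m : K) ≠ 0) {a : K} (ha : a ≠ 0) {r : ℕ}
    {A : K[X]} (hA : A.degree < r) (h : (X - C a) ^ r ∣ expand K m A) : A = 0 := by
  classical
  by_contra hA0
  have hr : r ≤ A.rootMultiplicity (a ^ m) := by
    rw [← rootMultiplicity_expand_of_ne_zero hm ha]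
    exact (le_rootMultiplicity_iff
      ((expand_ne_zero (Nat.pos_of_ne_zero (by rintro rfl; simp at hm))).mpr hA0)).mpr h
  have hdeg : A.natDegree < r := (natDegree_lt_iff_degree_lt hA0).mpr hA
  have := (Multiset.count_le_card (a ^ m) A.roots).trans (card_roots' A)
  rw [count_roots] at this
  omega

theorem exists_X_sub_C_pow_dvd_expand_sub (hm : (m : K) ≠ 0) {a : K} (ha : a ≠ 0) (r : ℕ)
    (T : K[X]) : ∃ P : K[X], (X - C a) ^ r ∣ expand K m P - T := by
  set q := (X - C a) ^ r
  have hq : q.Monic := (monic_X_sub_C a).pow r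
  have hmod : ∀ F : K[X], F %ₘ q ∈ degreeLT K r := fun F =>
    mem_degreeLT.mpr (by simpa [q] using degree_modByMonic_lt F hq)
  let L : degreeLT K r →ₗ[K] degreeLT K r :=
    ((modByMonicHom q).comp (expand K m).toLinearMap).restrict fun A _ => hmod _
  have : FiniteDimensional K (degreeLT K r) := (degreeLTEquiv K r).symm.finiteDimensional
  have hinj : Function.Injective L := by
    rw [← LinearMap.ker_eq_bot, LinearMap.ker_eq_bot']
    rintro ⟨A, hA⟩ hLA
    refine Subtype.ext (eq_zero_of_X_sub_C_pow_dvd_expand hm ha (mem_degreeLT.mp hA) ?_)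
    rw [← modByMonic_eq_zero_iff_dvd hq]
    exact congrArg Subtype.val hLA
  obtain ⟨⟨P, _⟩, hP⟩ := LinearMap.injective_iff_surjective.mp hinj ⟨T %ₘ q, hmod T⟩
  refine ⟨P, ?_⟩
  rw [← modByMonic_eq_zero_iff_dvd hq, sub_modByMonic, sub_eq_zero]
  exact congrArg Subtype.val hP

theorem X_sub_C_pow_dvd_of_comp_C_mul_X_eq {R : Type*} [CommRing R] {F : R[X]} {ζ a : R} {r : ℕ}
    (hF : F.comp (C ζ * X) = F) (h : (X - C (ζ * a)) ^ r ∣ F) : (X - C a) ^ r ∣ F := by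
  obtain ⟨u, hu⟩ := h
  refine ⟨C (ζ ^ r) * u.comp (C ζ * X), ?_⟩
  calc F = F.comp (C ζ * X) := hF.symm
    _ = ((X - C (ζ * a)) ^ r * u).comp (C ζ * X) := by rw [← hu]
    _ = (X - C a) ^ r * (C (ζ ^ r) * u.comp (C ζ * X)) := by
      rw [mul_comp, pow_comp, sub_comp, X_comp, C_comp, C_mul, ← mul_sub, mul_pow, C_pow]
      ring

/-- The solution at `b` is transported to `a` by the substitution `X ↦ (b / a) X`. -/
theorem exists_forall_X_sub_C_pow_dvd_expand_sub_X_pow (hm : (m : K) ≠ 0) {b : K} (hb : b ≠ 0)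
    (r N : ℕ) : ∃ P : K[X], ∀ a : K, a ≠ 0 → a ^ m = b ^ m → a ^ N = b ^ N →
      (X - C a) ^ r ∣ expand K m P - X ^ N := by
  obtain ⟨P, hP⟩ := exists_X_sub_C_pow_dvd_expand_sub hm hb r (X ^ N)
  refine ⟨P, fun a ha habm habN => ?_⟩
  have hζm : (b / a) ^ m = 1 := by rw [div_pow, habm, div_self (pow_ne_zero _ hb)]
  have hζN : (b / a) ^ N = 1 := by rw [div_pow, habN, div_self (pow_ne_zero _ hb)]
  refine X_sub_C_pow_dvd_of_comp_C_mul_X_eq (ζ := b / a) ?_ (by rwa [div_mul_cancel₀ b ha])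
  rw [sub_comp, expand_eq_comp_X_pow, comp_assoc, X_pow_comp, X_pow_comp, mul_pow, mul_pow,
    ← C_pow, ← C_pow, hζm, hζN, C_1, one_mul, one_mul]

theorem Splits.dvd_of_forall_X_sub_C_pow_dvd {q F : K[X]} (hq : q.Splits) (hq0 : q ≠ 0)
    (h : ∀ a ∈ q.roots, (X - C a) ^ q.natDegree ∣ F) : q ∣ F := by
  classical
  obtain rfl | hF := eq_or_ne F 0
  · exact dvd_zero q
  rw [hq.eq_prod_roots, C_mul_dvd (leadingCoeff_ne_zero.mpr hq0),
    Multiset.prod_X_sub_C_dvd_iff_le_roots hF, Multiset.le_iff_count]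
  intro a
  by_cases ha : a ∈ q.roots
  · rw [count_roots F]
    exact ((Multiset.count_le_card a _).trans (card_roots' q)).trans
      ((le_rootMultiplicity_iff hF).mpr (h a ha))
  · simp [Multiset.count_eq_zero.mpr ha]

theorem Splits.exists_dvd_expand_sub_X_pow {q : K[X]} (hq : q.Splits) (hq0 : q ≠ 0) {N : ℕ}
    (hm : (m : K) ≠ 0) (h0 : ∀ a ∈ q.roots, a ≠ 0)
    (hN : ∀ a ∈ q.roots, ∀ b ∈ q.roots, a ^ m = b ^ m → a ^ N = b ^ N) :
    ∃ P : K[X], q ∣ expand K m P - X ^ N := by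
  classical
  set r := q.natDegree
  have hloc : ∀ μ : K, ∃ Pμ : K[X], ∀ a ∈ q.roots, a ^ m = μ →
      (X - C a) ^ r ∣ expand K m Pμ - X ^ N := by
    intro μ
    by_cases hμ : ∃ b ∈ q.roots, b ^ m = μ
    · obtain ⟨b, hb, rfl⟩ := hμ
      obtain ⟨P, hP⟩ := exists_forall_X_sub_C_pow_dvd_expand_sub_X_pow hm (h0 b hb) r N
      exact ⟨P, fun a ha hab => hP a (h0 a ha) hab (hN a ha b hb hab)⟩
    · exact ⟨0, fun a ha hab => (hμ ⟨a, ha, hab⟩).elim⟩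
  choose Ploc hPloc using hloc
  obtain ⟨P, hP⟩ := Ideal.exists_forall_sub_mem_ideal
    (I := fun μ : q.roots.toFinset.image (· ^ m) => Ideal.span {(X - C (μ : K)) ^ r})
    (fun μ ν hμν => (Ideal.isCoprime_span_singleton_iff _ _).mpr
      ((pairwise_coprime_X_sub_C Subtype.val_injective hμν).pow))
    (fun μ => Ploc μ)
  refine ⟨P, hq.dvd_of_forall_X_sub_C_pow_dvd hq0 fun a ha => ?_⟩
  have hPa : (X - C (a ^ m)) ^ r ∣ P - Ploc (a ^ m) := Ideal.mem_span_singleton.mp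
    (hP ⟨a ^ m, Finset.mem_image_of_mem _ (Multiset.mem_toFinset.mpr ha)⟩)
  have hsplit : expand K m P - X ^ N
      = expand K m (P - Ploc (a ^ m)) + (expand K m (Ploc (a ^ m)) - X ^ N) := by
    rw [map_sub, sub_add_sub_cancel]
  rw [hsplit]
  refine dvd_add (dvd_trans ?_ (_root_.map_dvd (expand K m) hPa)) (hPloc (a ^ m) a ha rfl)
  rw [map_pow, map_sub, expand_X, expand_C, C_pow]
  exact pow_dvd_pow_of_dvd (sub_dvd_pow_sub_pow X (C a) m) r

end LocalSolutions

section Descent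

variable {F K : Type*} [Field F] [Field K] [Algebra F K]

noncomputable def mapLinear (π : K →ₗ[F] F) : K[X] →ₗ[F] F[X] :=
  lsum fun n => (monomial n).comp π

@[simp]
theorem coeff_mapLinear (π : K →ₗ[F] F) (P : K[X]) (n : ℕ) :
    (mapLinear π P).coeff n = π (P.coeff n) := by
  by_cases hn : P.coeff n = 0 <;>
    simp [mapLinear, lsum_apply, coeff_monomial, Polynomial.sum_def, hn]

theorem mapLinear_map_mul (π : K →ₗ[F] F) (p : F[X]) (G : K[X]) :
    mapLinear π (p.map (algebraMap F K) * G) = p * mapLinear π G := by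
  ext n
  simp only [coeff_mapLinear, coeff_mul, coeff_map, map_sum, ← Algebra.smul_def, map_smul,
    smul_eq_mul]

theorem mapLinear_expand (π : K →ₗ[F] F) (m : ℕ) (P : K[X]) :
    mapLinear π (expand K m P) = expand F m (mapLinear π P) := by
  rcases Nat.eq_zero_or_pos m with rfl | hm
  · have hdeg : (mapLinear π P).natDegree < P.natDegree + 1 :=
      Nat.lt_succ_of_le (natDegree_le_iff_coeff_eq_zero.mpr fun i hi => by
        simp [coeff_eq_zero_of_natDegree_lt hi])
    rw [expand_zero, expand_zero, eval_eq_sum_range, eval_eq_sum_range' hdeg]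
    ext n
    by_cases hn : n = 0 <;> simp [coeff_C, map_sum, hn]
  ext n
  simp only [coeff_mapLinear, coeff_expand hm]
  split_ifs <;> simp

theorem mapLinear_map {π : K →ₗ[F] F} (hπ : ∀ c, π (algebraMap F K c) = c) (T : F[X]) :
    mapLinear π (T.map (algebraMap F K)) = T := by
  ext n
  simp [hπ]

theorem exists_dvd_expand_sub_of_map_dvd {p T : F[X]} {m : ℕ} {P : K[X]}
    (h : p.map (algebraMap F K) ∣ expand K m P - T.map (algebraMap F K)) :
    ∃ Q : F[X], p ∣ expand F m Q - T := by
  obtain ⟨π, hπ⟩ := (Algebra.linearMap F K).exists_leftInverse_of_injective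
    (LinearMap.ker_eq_bot.mpr (algebraMap F K).injective)
  have hπ' : ∀ c, π (algebraMap F K c) = c := fun c => LinearMap.congr_fun hπ c
  obtain ⟨G, hG⟩ := h
  refine ⟨mapLinear π P, mapLinear π G, ?_⟩
  have := congrArg (mapLinear π) hG
  rwa [map_sub, mapLinear_expand, mapLinear_map hπ', mapLinear_map_mul] at this

end Descent

end Polynomial

def uniformPeriod (d : ℕ) : ℕ := ((d * d + 1) * (d * d))!

theorem exists_dvd_expand_sub_X_pow_uniformPeriod {p : ℚ[X]} (hp : p.coeff 0 ≠ 0) {d : ℕ}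
    (hd : p.natDegree ≤ d) {m : ℕ} (hm : m ≠ 0) :
    ∃ Q : ℚ[X], p ∣ expand ℚ m Q - X ^ uniformPeriod d := by
  let K := p.SplittingField
  have hp0 : p ≠ 0 := fun h => hp (by simp [h])
  have hroot : ∀ a ∈ (p.map (algebraMap ℚ K)).roots, aeval a p = 0 := fun a ha =>
    (mem_roots_map hp0).mp ha
  have hdeg : ∀ a ∈ (p.map (algebraMap ℚ K)).roots, (minpoly ℚ a).natDegree ≤ d := fun a ha =>
    (natDegree_le_of_dvd (minpoly.dvd ℚ a (hroot a ha)) hp0).trans hd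
  have h0 : ∀ a ∈ (p.map (algebraMap ℚ K)).roots, a ≠ 0 := by
    rintro a ha rfl
    exact hp (by simpa [← coeff_zero_eq_aeval_zero'] using hroot 0 ha)
  have hN : ∀ a ∈ (p.map (algebraMap ℚ K)).roots, ∀ b ∈ (p.map (algebraMap ℚ K)).roots,
      a ^ m = b ^ m → a ^ uniformPeriod d = b ^ uniformPeriod d := by
    intro a ha b hb hab
    have hb0 := h0 b hb
    have hζ : IsOfFinOrder (a * b⁻¹) := isOfFinOrder_iff_pow_eq_one.mpr
      ⟨m, Nat.pos_of_ne_zero hm, by rw [mul_pow, inv_pow, hab, mul_inv_cancel₀ (pow_ne_zero _ hb0)]⟩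
    have := hζ.pow_factorial_eq_one ((minpoly.natDegree_mul_inv_le (IsIntegral.of_finite ℚ a)
      (IsIntegral.of_finite ℚ b)).trans (Nat.mul_le_mul (hdeg a ha) (hdeg b hb)))
    rwa [mul_pow, inv_pow, mul_inv_eq_one₀ (pow_ne_zero _ hb0)] at this
  obtain ⟨P, hP⟩ := (SplittingField.splits p).exists_dvd_expand_sub_X_pow (map_ne_zero hp0)
    (Nat.cast_ne_zero.mpr hm) h0 hN
  exact exists_dvd_expand_sub_of_map_dvd (T := X ^ _) (by simpa using hP)

theorem Module.End.exists_pow_uniformPeriod_eq_aeval_pow {V : Type*} [AddCommGroup V]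
    [Module ℚ V] [FiniteDimensional ℚ V] {f : Module.End ℚ V} (hf : Function.Injective f)
    {m : ℕ} (hm : m ≠ 0) :
    ∃ Q : ℚ[X], f ^ uniformPeriod (Module.finrank ℚ V) = aeval (f ^ m) Q := by
  have hdeg : (minpoly ℚ f).natDegree ≤ Module.finrank ℚ V :=
    (natDegree_le_of_dvd (LinearMap.minpoly_dvd_charpoly f) f.charpoly_monic.ne_zero).trans
      f.charpoly_natDegree.le
  obtain ⟨Q, G, hG⟩ := exists_dvd_expand_sub_X_pow_uniformPeriod
    (LinearMap.minpoly_coeff_zero_of_injective hf) hdeg hm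
  refine ⟨Q, ?_⟩
  have := congrArg (aeval f) hG
  rwa [map_mul, minpoly.aeval, zero_mul, map_sub, expand_aeval, map_pow, aeval_X, sub_eq_zero,
    eq_comm] at this

/-- **Uniform periods of periodic subspaces.** For every `d` there is `n₀ ≥ 1`, depending
only on `d`, such that for every `d`-dimensional `ℚ`-vector space `V`, every linear
automorphism `f` of `V` and every `f`-periodic subspace `W ⊆ V` (i.e. `fⁿ(W) = W` for some
`n ≥ 1`), one has `f^{n₀}(W) = W`. -/
theorem periodic_subspace_uniform_period (d : ℕ) :
    ∃ n₀ : ℕ, 1 ≤ n₀ ∧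
      ∀ (V : Type) [AddCommGroup V] [Module ℚ V] [FiniteDimensional ℚ V],
        Module.finrank ℚ V = d →
        ∀ (f : V ≃ₗ[ℚ] V) (W : Submodule ℚ V),
          (∃ n : ℕ, 1 ≤ n ∧ W.map ((f ^ n : V ≃ₗ[ℚ] V) : V →ₗ[ℚ] V) = W) →
          W.map ((f ^ n₀ : V ≃ₗ[ℚ] V) : V →ₗ[ℚ] V) = W := by
  refine ⟨uniformPeriod d, Nat.factorial_pos _, ?_⟩
  rintro V _ _ _ rfl f W ⟨n, hn, hW⟩
  have hcoe (k : ℕ) : ((f ^ k : V ≃ₗ[ℚ] V) : V →ₗ[ℚ] V) = (f : Module.End ℚ V) ^ k :=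
    map_pow LinearEquiv.automorphismGroup.toLinearMapMonoidHom f k
  obtain ⟨Q, hQ⟩ := Module.End.exists_pow_uniformPeriod_eq_aeval_pow f.injective
    (m := n) (by omega)
  refine Submodule.eq_of_le_of_finrank_le ?_ (LinearEquiv.finrank_map_eq _ _).ge
  rw [hcoe] at hW
  rw [hcoe, hQ, Submodule.map_le_iff_le_comap]
  exact fun w hw => aeval_apply_smul_mem_of_le_comap hw Q _ (Submodule.map_le_iff_le_comap.mp hW.le)
end

section
/- Let K be a complete non-archimedean valued field, r ∈ (ℝ>0)ⁿ, and f, g nonzero elements of the polydisc algebra K{r⁻¹T} of convergent power series on the polydisc of polyradius r. Define ord(f) as the maximum of |I| = i₁ + ⋯ + iₙ over all multi-indices I with |a_I|·r^I equal to the Gauss norm of f. Then ord(fg) = ord(f) + ord(g). -/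
open Filter

/-- Membership in the polydisc algebra `K{r⁻¹T}`: the power series `f` has coefficients
with `‖a_I‖ · r^I → 0`. -/
def MemPolydisc {K : Type*} [NormedField K] {n : ℕ} (r : Fin n → ℝ)
    (f : MvPowerSeries (Fin n) K) : Prop :=
  Tendsto (fun I : Fin n →₀ ℕ => ‖MvPowerSeries.coeff I f‖ * ∏ i, r i ^ I i)
    cofinite (nhds 0)

/-- The Gauss norm `‖∑ a_I T^I‖ = sup_I ‖a_I‖ r^I` on the polydisc algebra. -/
noncomputable def gaussNorm {K : Type*} [NormedField K] {n : ℕ} (r : Fin n → ℝ)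
    (f : MvPowerSeries (Fin n) K) : ℝ :=
  ⨆ I : Fin n →₀ ℕ, ‖MvPowerSeries.coeff I f‖ * ∏ i, r i ^ I i

/-- `ord(f)`: the maximal total degree `|I|` among multi-indices `I` with
`‖a_I‖ r^I = ‖f‖` (Gauss norm). -/
noncomputable def polyOrd {K : Type*} [NormedField K] {n : ℕ} (r : Fin n → ℝ)
    (f : MvPowerSeries (Fin n) K) : ℕ :=
  sSup {d : ℕ | ∃ I : Fin n →₀ ℕ, (I.sum fun _ k => k) = d ∧
    ‖MvPowerSeries.coeff I f‖ * ∏ i, r i ^ I i = gaussNorm r f}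

/-!
Call `I` dominant for `f` when `‖a_I‖ r^I` equals the Gauss norm of `f`. As these weights tend
to zero, a nonzero `f` has finitely many dominant indices and positive Gauss norm. Let `I` and `J`
be the largest dominant indices of `f` and `g` for the degree-lexicographic order; since that order
refines total degree, `|I| = ord f` and `|J| = ord g`, and since it is compatible with addition,
`(I, J)` is the only pair of dominant indices with sum `I + J`. So in the coefficient of `fg` at
`I + J` the term `a_I b_J` strictly dominates all others, and the ultrametric inequality gives
`‖fg‖ = ‖f‖ ‖g‖`, attained at `I + J`. Conversely, the ultrametric inequality writes every
dominant index of `fg` as a sum of dominant indices of `f` and `g`, of degree at most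
`ord f + ord g`.
-/

open Topology

theorem Filter.Tendsto.exists_forall_ge_of_nhds_zero {α : Type*} {u : α → ℝ}
    (hu : Tendsto u cofinite (𝓝 0)) {a : α} (ha : 0 < u a) : ∃ b, ∀ c, u c ≤ u b := by
  have hfin : {c | u a ≤ u c}.Finite := by
    simpa using eventually_cofinite.mp (hu.eventually_lt_const ha)
  obtain ⟨b, hab, hb⟩ := Set.exists_max_image _ u hfin ⟨a, le_refl (u a)⟩
  exact ⟨b, fun c => (le_or_gt (u a) (u c)).elim (hb c) fun h => h.le.trans hab⟩

theorem IsUltrametricDist.norm_sum_eq_of_forall_ne_norm_lt {M ι : Type*}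
    [SeminormedAddCommGroup M] [IsUltrametricDist M] [DecidableEq ι] {s : Finset ι} {f : ι → M}
    {i : ι} (hi : i ∈ s) (h : ∀ j ∈ s, j ≠ i → ‖f j‖ < ‖f i‖) : ‖∑ j ∈ s, f j‖ = ‖f i‖ := by
  rw [← Finset.add_sum_erase s f hi]
  rcases (s.erase i).eq_empty_or_nonempty with hempty | hne
  · simp [hempty]
  obtain ⟨j, hj, hle⟩ := exists_norm_finsetSum_le_of_nonempty hne f
  have hrest : ‖∑ k ∈ s.erase i, f k‖ < ‖f i‖ :=
    hle.trans_lt (h j (Finset.mem_of_mem_erase hj) (Finset.ne_of_mem_erase hj))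
  rw [norm_add_eq_max_of_norm_ne_norm hrest.ne', max_eq_left hrest.le]

theorem eq_and_eq_of_mul_le_mul {a b A B : ℝ} (ha : 0 ≤ a) (haA : a ≤ A) (hbB : b ≤ B)
    (hAB : 0 < A * B) (h : A * B ≤ a * b) : a = A ∧ b = B := by
  have hb : 0 < b := pos_of_mul_pos_right (hAB.trans_le h) ha
  have hA : 0 < A := pos_of_mul_pos_left hAB (hb.le.trans hbB)
  constructor <;> nlinarith

section Weight

variable {K : Type*} [NormedField K] {n : ℕ} {r : Fin n → ℝ}

variable (r) in
noncomputable def polyWeight (f : MvPowerSeries (Fin n) K) (I : Fin n →₀ ℕ) : ℝ :=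
  ‖MvPowerSeries.coeff I f‖ * ∏ i, r i ^ I i

variable (r) in
def dominantIndices (f : MvPowerSeries (Fin n) K) : Set (Fin n →₀ ℕ) :=
  {I | polyWeight r f I = gaussNorm r f}

theorem mem_dominantIndices {f : MvPowerSeries (Fin n) K} {I : Fin n →₀ ℕ} :
    I ∈ dominantIndices r f ↔ polyWeight r f I = gaussNorm r f :=
  Iff.rfl

theorem polyOrd_eq_of_isGreatest {f : MvPowerSeries (Fin n) K} {d : ℕ}
    (h : IsGreatest (Finsupp.degree '' dominantIndices r f) d) : polyOrd r f = d := by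
  have hset : {d : ℕ | ∃ I : Fin n →₀ ℕ, (I.sum fun _ k => k) = d ∧
      ‖MvPowerSeries.coeff I f‖ * ∏ i, r i ^ I i = gaussNorm r f} =
      Finsupp.degree '' dominantIndices r f :=
    Set.ext fun _ => ⟨fun ⟨I, hd, hI⟩ => ⟨I, hI, hd⟩, fun ⟨I, hI, hd⟩ => ⟨I, hd, hI⟩⟩
  rw [polyOrd, hset]
  exact h.csSup_eq

theorem polyOrd_eq_degree_of_forall_toDegLex_le {f : MvPowerSeries (Fin n) K}
    {I : Fin n →₀ ℕ} (hI : I ∈ dominantIndices r f)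
    (hmax : ∀ a ∈ dominantIndices r f, toDegLex a ≤ toDegLex I) : polyOrd r f = I.degree :=
  polyOrd_eq_of_isGreatest ⟨⟨I, hI, rfl⟩, Set.forall_mem_image.2 fun a ha =>
    Finsupp.DegLex.monotone_degree (hmax a ha)⟩

theorem polyWeight_nonneg (hr : ∀ i, 0 ≤ r i) (f : MvPowerSeries (Fin n) K)
    (I : Fin n →₀ ℕ) : 0 ≤ polyWeight r f I :=
  mul_nonneg (norm_nonneg _) (Finset.prod_nonneg fun i _ => pow_nonneg (hr i) _)

theorem MemPolydisc.polyWeight_le_gaussNorm {f : MvPowerSeries (Fin n) K}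
    (hf : MemPolydisc r f) (I : Fin n →₀ ℕ) : polyWeight r f I ≤ gaussNorm r f :=
  le_ciSup hf.bddAbove_range_of_cofinite I

theorem MemPolydisc.gaussNorm_pos (hr : ∀ i, 0 < r i) {f : MvPowerSeries (Fin n) K}
    (hf0 : f ≠ 0) (hf : MemPolydisc r f) : 0 < gaussNorm r f := by
  obtain ⟨I, hI⟩ := (MvPowerSeries.ne_zero_iff_exists_coeff_ne_zero f).mp hf0
  have hpos : 0 < polyWeight r f I :=
    mul_pos (norm_pos_iff.mpr hI) (Finset.prod_pos fun i _ => pow_pos (hr i) _)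
  exact hpos.trans_le (hf.polyWeight_le_gaussNorm I)

theorem MemPolydisc.dominantIndices_nonempty {f : MvPowerSeries (Fin n) K}
    (hf : MemPolydisc r f) (hpos : 0 < gaussNorm r f) : (dominantIndices r f).Nonempty := by
  obtain ⟨I, hI⟩ := exists_lt_of_lt_ciSup hpos
  obtain ⟨J, hJ⟩ := hf.exists_forall_ge_of_nhds_zero hI
  exact ⟨J, le_antisymm (hf.polyWeight_le_gaussNorm J) (ciSup_le hJ)⟩

theorem MemPolydisc.dominantIndices_finite {f : MvPowerSeries (Fin n) K}
    (hf : MemPolydisc r f) (hpos : 0 < gaussNorm r f) : (dominantIndices r f).Finite :=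
  (eventually_cofinite.mp (hf.eventually_lt_const hpos)).subset fun _ hI => hI.ge.not_gt

end Weight

section Product

open Finset.HasAntidiagonal

variable {K : Type*} [NormedField K] {n : ℕ} {r : Fin n → ℝ} {f g : MvPowerSeries (Fin n) K}

theorem polyWeight_mul_polyWeight_of_add_eq {a b c : Fin n →₀ ℕ} (h : a + b = c) :
    polyWeight r f a * polyWeight r g b =
      ‖MvPowerSeries.coeff a f * MvPowerSeries.coeff b g‖ * ∏ i, r i ^ c i := by
  simp only [polyWeight, norm_mul, ← h, Finsupp.add_apply, pow_add, Finset.prod_mul_distrib]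
  ring

theorem MemPolydisc.mem_dominantIndices_of_le_polyWeight_mul (hr : ∀ i, 0 ≤ r i)
    (hf : MemPolydisc r f) (hg : MemPolydisc r g) (hpos : 0 < gaussNorm r f * gaussNorm r g)
    {a b : Fin n →₀ ℕ} (h : gaussNorm r f * gaussNorm r g ≤ polyWeight r f a * polyWeight r g b) :
    a ∈ dominantIndices r f ∧ b ∈ dominantIndices r g :=
  eq_and_eq_of_mul_le_mul (polyWeight_nonneg hr f a) (hf.polyWeight_le_gaussNorm a)
    (hg.polyWeight_le_gaussNorm b) hpos h

variable [IsUltrametricDist K]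

theorem exists_polyWeight_mul_le (hr : ∀ i, 0 ≤ r i) (c : Fin n →₀ ℕ) :
    ∃ p ∈ antidiagonal c, polyWeight r (f * g) c ≤ polyWeight r f p.1 * polyWeight r g p.2 := by
  classical
  obtain ⟨p, hp, hle⟩ := IsUltrametricDist.exists_norm_finsetSum_le_of_nonempty
    ⟨(0, c), mem_antidiagonal.mpr (zero_add c)⟩ fun p : (Fin n →₀ ℕ) × (Fin n →₀ ℕ) =>
      MvPowerSeries.coeff p.1 f * MvPowerSeries.coeff p.2 g
  refine ⟨p, hp, ?_⟩
  rw [polyWeight_mul_polyWeight_of_add_eq (mem_antidiagonal.mp hp), polyWeight,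
    MvPowerSeries.coeff_mul]
  exact mul_le_mul_of_nonneg_right hle (Finset.prod_nonneg fun i _ => pow_nonneg (hr i) _)

theorem MemPolydisc.polyWeight_mul_le (hr : ∀ i, 0 ≤ r i) (hf : MemPolydisc r f)
    (hg : MemPolydisc r g) (c : Fin n →₀ ℕ) :
    polyWeight r (f * g) c ≤ gaussNorm r f * gaussNorm r g := by
  obtain ⟨⟨a, b⟩, -, hle⟩ := exists_polyWeight_mul_le (f := f) (g := g) hr c
  exact hle.trans (mul_le_mul (hf.polyWeight_le_gaussNorm a) (hg.polyWeight_le_gaussNorm b)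
    (polyWeight_nonneg hr g b) ((polyWeight_nonneg hr f a).trans (hf.polyWeight_le_gaussNorm a)))

theorem MemPolydisc.exists_add_eq_of_le_polyWeight_mul (hr : ∀ i, 0 ≤ r i)
    (hf : MemPolydisc r f) (hg : MemPolydisc r g) (hpos : 0 < gaussNorm r f * gaussNorm r g)
    {c : Fin n →₀ ℕ} (hc : gaussNorm r f * gaussNorm r g ≤ polyWeight r (f * g) c) :
    ∃ a ∈ dominantIndices r f, ∃ b ∈ dominantIndices r g, a + b = c := by
  obtain ⟨⟨a, b⟩, hab, hle⟩ := exists_polyWeight_mul_le (f := f) (g := g) hr c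
  obtain ⟨ha, hb⟩ := hf.mem_dominantIndices_of_le_polyWeight_mul hr hg hpos (hc.trans hle)
  exact ⟨a, ha, b, hb, mem_antidiagonal.mp hab⟩

theorem MemPolydisc.polyWeight_mul_add_eq (hr : ∀ i, 0 ≤ r i)
    (hf : MemPolydisc r f) (hg : MemPolydisc r g) (hpos : 0 < gaussNorm r f * gaussNorm r g)
    {I J : Fin n →₀ ℕ} (hI : I ∈ dominantIndices r f) (hJ : J ∈ dominantIndices r g)
    (huniq : ∀ a ∈ dominantIndices r f, ∀ b ∈ dominantIndices r g, a + b = I + J → a = I ∧ b = J) :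
    polyWeight r (f * g) (I + J) = gaussNorm r f * gaussNorm r g := by
  classical
  have htop := polyWeight_mul_polyWeight_of_add_eq (r := r) (f := f) (g := g) (rfl : I + J = I + J)
  rw [mem_dominantIndices.mp hI, mem_dominantIndices.mp hJ] at htop
  have hdom : ∀ p ∈ antidiagonal (I + J), p ≠ (I, J) →
      ‖MvPowerSeries.coeff p.1 f * MvPowerSeries.coeff p.2 g‖ <
        ‖MvPowerSeries.coeff I f * MvPowerSeries.coeff J g‖ := by
    intro p hp hne
    have hsum := mem_antidiagonal.mp hp
    have hlt : polyWeight r f p.1 * polyWeight r g p.2 < gaussNorm r f * gaussNorm r g := by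
      refine lt_of_not_ge fun h => hne ?_
      obtain ⟨ha, hb⟩ := hf.mem_dominantIndices_of_le_polyWeight_mul hr hg hpos h
      exact Prod.ext_iff.mpr (huniq _ ha _ hb hsum)
    rw [polyWeight_mul_polyWeight_of_add_eq hsum, htop] at hlt
    exact lt_of_mul_lt_mul_right hlt (Finset.prod_nonneg fun i _ => pow_nonneg (hr i) _)
  have hmem : (I, J) ∈ antidiagonal (I + J) := mem_antidiagonal.mpr rfl
  rw [htop, polyWeight, MvPowerSeries.coeff_mul,
    IsUltrametricDist.norm_sum_eq_of_forall_ne_norm_lt hmem hdom]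

end Product

theorem polyOrd_mul_general {K : Type*} [NormedField K] [IsUltrametricDist K]
    {n : ℕ} (r : Fin n → ℝ) (hr : ∀ i, 0 < r i) (f g : MvPowerSeries (Fin n) K)
    (hf0 : f ≠ 0) (hg0 : g ≠ 0) (hf : MemPolydisc r f) (hg : MemPolydisc r g) :
    polyOrd r (f * g) = polyOrd r f + polyOrd r g := by
  have hr' : ∀ i, 0 ≤ r i := fun i => (hr i).le
  have hpf := hf.gaussNorm_pos hr hf0
  have hpg := hg.gaussNorm_pos hr hg0
  have hpos := mul_pos hpf hpg
  obtain ⟨I, hI, hImax⟩ := Set.exists_max_image _ toDegLex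
    (hf.dominantIndices_finite hpf) (hf.dominantIndices_nonempty hpf)
  obtain ⟨J, hJ, hJmax⟩ := Set.exists_max_image _ toDegLex
    (hg.dominantIndices_finite hpg) (hg.dominantIndices_nonempty hpg)
  have hIJ : polyWeight r (f * g) (I + J) = gaussNorm r f * gaussNorm r g :=
    hf.polyWeight_mul_add_eq hr' hg hpos hI hJ fun a ha b hb hab =>
      (add_eq_add_iff_eq_and_eq (hImax a ha) (hJmax b hb)).mp
        (by rw [← toDegLex_add, ← toDegLex_add, hab])
  have hfg : gaussNorm r (f * g) = gaussNorm r f * gaussNorm r g :=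
    ciSup_eq_of_forall_le_of_forall_lt_exists_gt (hf.polyWeight_mul_le hr' hg)
      fun w hw => ⟨I + J, hw.trans_eq hIJ.symm⟩
  rw [polyOrd_eq_degree_of_forall_toDegLex_le hI hImax,
    polyOrd_eq_degree_of_forall_toDegLex_le hJ hJmax, ← map_add]
  refine polyOrd_eq_of_isGreatest ⟨⟨I + J, hIJ.trans hfg.symm, rfl⟩, ?_⟩
  rintro _ ⟨c, hc, rfl⟩
  obtain ⟨a, ha, b, hb, rfl⟩ :=
    hf.exists_add_eq_of_le_polyWeight_mul hr' hg hpos (hfg ▸ hc.ge)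
  rw [map_add, map_add]
  exact add_le_add (Finsupp.DegLex.monotone_degree (hImax a ha))
    (Finsupp.DegLex.monotone_degree (hJmax b hb))

/-- For nonzero elements `f, g` of the polydisc algebra `K{r⁻¹T}` over a complete
non-archimedean valued field, `ord(fg) = ord(f) + ord(g)`. -/
theorem polyOrd_mul {K : Type*} [NormedField K] [IsUltrametricDist K] [CompleteSpace K]
    {n : ℕ} (r : Fin n → ℝ) (hr : ∀ i, 0 < r i) (f g : MvPowerSeries (Fin n) K)
    (hf0 : f ≠ 0) (hg0 : g ≠ 0) (hf : MemPolydisc r f) (hg : MemPolydisc r g) :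
    polyOrd r (f * g) = polyOrd r f + polyOrd r g :=
  polyOrd_mul_general r hr f g hf0 hg0 hf hg
end

section
/- Let (K, |·|) be a complete non-archimedean field, r₀, s₀ > 0, u ∈ K{r₀⁻¹z} and v ∈ K{s₀⁻¹z} power series with u(0) = v(0) = 0 satisfying u(v(z)) = v(u(z)) = z as formal power series. Then there exists r₁ ∈ (0, r₀] such that for all r ∈ (0, r₁], the map z ↦ u(z) defines an isometric isomorphism K{(|u'(0)|·r)⁻¹ z} → K{r⁻¹z}, with inverse given by z ↦ v(z), and ‖v‖ on radius |u'(0)|·r equals r. -/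
open Filter

/-- Membership in the one-variable disc algebra `K{r⁻¹z}`: coefficients satisfy
`‖aₖ‖ rᵏ → 0`. -/
def MemDisc {K : Type*} [NormedField K] (r : ℝ) (f : PowerSeries K) : Prop :=
  Tendsto (fun k : ℕ => ‖PowerSeries.coeff k f‖ * r ^ k) atTop (nhds 0)

/-- The Gauss norm `‖∑ aₖ zᵏ‖_r = sup_k ‖aₖ‖ rᵏ`. -/
noncomputable def gauss1 {K : Type*} [NormedField K] (r : ℝ) (f : PowerSeries K) : ℝ :=
  ⨆ k : ℕ, ‖PowerSeries.coeff k f‖ * r ^ k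

/-- Composition `f(g(z))` of formal power series; when `g` has zero constant term this is
the usual substitution. -/
noncomputable def psComp {K : Type*} [CommRing K] (f g : PowerSeries K) : PowerSeries K :=
  PowerSeries.mk fun n =>
    ∑ k ∈ Finset.range (n + 1), PowerSeries.coeff k f * PowerSeries.coeff n (g ^ k)

/-!
If `‖w_k‖ sᵏ ≤ ρ` for all `k`, the ultrametric inequality gives
`‖(wᵐ)_n‖ sⁿ ≤ ρᵐ`, hence `‖g ∘ w‖_s ≤ ‖g‖_ρ`. For small `r` the Gauss norm of `u` at radius `r`
is attained by its linear term, so `u` sends the `r`-disc into the `‖u'(0)‖ r`-disc and `v` sends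
it back; the two inequalities `‖g ∘ u‖_r ≤ ‖g‖_{‖u'(0)‖ r} = ‖(g ∘ u) ∘ v‖_{‖u'(0)‖ r} ≤ ‖g ∘ u‖_r`
force equality. The same bound at radius `2r` gains a factor `2^(m - n)` on the contribution of
`g_m` to `(g ∘ u)_n`, which is what keeps the coefficients of `g ∘ u` tending to zero.
-/

open PowerSeries Topology

section Substitution

variable {R : Type*} [CommRing R]

lemma coeff_pow_eq_zero_of_lt {w : PowerSeries R} (hw : constantCoeff w = 0) {n d : ℕ}
    (h : n < d) : coeff n (w ^ d) = 0 :=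
  coeff_of_lt_order n <| (Nat.cast_lt.2 h).trans_le (le_order_pow_of_constantCoeff_eq_zero d hw)

lemma psComp_eq_subst {w : PowerSeries R} (hw : constantCoeff w = 0) (f : PowerSeries R) :
    psComp f w = f.subst w := by
  ext n
  rw [coeff_subst' (HasSubst.of_constantCoeff_zero' hw),
    finsum_eq_sum_of_support_subset _ (s := Finset.range (n + 1)) ?_]
  · simp [psComp]
  · intro d hd
    by_contra hdn
    simp only [Finset.coe_range, Set.mem_Iio, not_lt] at hdn
    simp [coeff_pow_eq_zero_of_lt hw hdn] at hd

lemma psComp_psComp_eq_self {u v : PowerSeries R} (hu : constantCoeff u = 0)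
    (hv : constantCoeff v = 0) (hvu : psComp v u = X) (h : PowerSeries R) :
    psComp (psComp h v) u = h := by
  rw [psComp_eq_subst hv, psComp_eq_subst hu, subst_comp_subst_apply
    (HasSubst.of_constantCoeff_zero' hv) (HasSubst.of_constantCoeff_zero' hu),
    ← psComp_eq_subst hu, hvu, X_subst]

lemma coeff_one_mul_coeff_one_of_psComp_eq_X {u v : PowerSeries R} (huv : psComp u v = X) :
    coeff 1 u * coeff 1 v = 1 := by
  simpa [psComp, Finset.sum_range_succ, coeff_one] using congrArg (coeff 1) huv

end Substitution

lemma tendsto_zero_of_le_mul_pow_sub {G a : ℕ → ℝ} {q : ℝ} (hq0 : 0 ≤ q) (hq1 : q < 1)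
    (hG : Tendsto G atTop (𝓝 0)) (ha0 : ∀ n, 0 ≤ a n)
    (ha : ∀ n, ∃ m ≤ n, a n ≤ G m * q ^ (n - m)) : Tendsto a atTop (𝓝 0) := by
  obtain ⟨A, hA⟩ := (by simpa using hG.abs : Tendsto (|G ·|) atTop (𝓝 0)).bddAbove_range
  have hAq : Tendsto (fun k => A * q ^ k) atTop (𝓝 0) := by
    simpa using (tendsto_pow_atTop_nhds_zero_of_lt_one hq0 hq1).const_mul A
  rw [Metric.tendsto_atTop] at hG hAq ⊢
  intro ε hε
  obtain ⟨N, hN⟩ := hG ε hε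
  obtain ⟨N', hN'⟩ := hAq ε hε
  refine ⟨N + N', fun n hn => ?_⟩
  obtain ⟨m, hmn, hm⟩ := ha n
  have hGm : a n ≤ |G m| * q ^ (n - m) :=
    hm.trans (mul_le_mul_of_nonneg_right (le_abs_self _) (by positivity))
  rw [Real.dist_eq, sub_zero, abs_of_nonneg (ha0 n)]
  rcases le_or_gt N m with hNm | hmN
  · have := hN m hNm
    rw [Real.dist_eq, sub_zero] at this
    calc a n ≤ |G m| * q ^ (n - m) := hGm
      _ ≤ |G m| := mul_le_of_le_one_right (abs_nonneg _) (pow_le_one₀ hq0 hq1.le)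
      _ < ε := this
  · have := hN' (n - m) (by omega)
    rw [Real.dist_eq, sub_zero] at this
    calc a n ≤ |G m| * q ^ (n - m) := hGm
      _ ≤ A * q ^ (n - m) :=
          mul_le_mul_of_nonneg_right (hA (Set.mem_range_self m)) (by positivity)
      _ < ε := (le_abs_self _).trans_lt this

section Ultrametric

variable {K : Type*} [NormedField K] [IsUltrametricDist K]

open Finset in
lemma norm_coeff_pow_mul_pow_le {w : PowerSeries K} {t C : ℝ} (ht : 0 ≤ t)
    (hw : ∀ k, ‖coeff k w‖ * t ^ k ≤ C) (m n : ℕ) :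
    ‖coeff n (w ^ m)‖ * t ^ n ≤ C ^ m := by
  induction m generalizing n with
  | zero =>
    rw [pow_zero, coeff_one]
    split_ifs with h <;> simp [h]
  | succ m ih =>
    have hC : 0 ≤ C := (by positivity : (0 : ℝ) ≤ ‖coeff 0 w‖ * t ^ 0).trans (hw 0)
    rw [pow_succ, coeff_mul]
    obtain ⟨⟨p, q⟩, hpq, hle⟩ := IsUltrametricDist.exists_norm_finsetSum_le_of_nonempty
      (t := antidiagonal n) ⟨(n, 0), by simp⟩
      fun pq => coeff pq.1 (w ^ m) * coeff pq.2 w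
    rw [HasAntidiagonal.mem_antidiagonal] at hpq
    calc ‖∑ pq ∈ antidiagonal n, coeff pq.1 (w ^ m) * coeff pq.2 w‖ * t ^ n
        ≤ ‖coeff p (w ^ m) * coeff q w‖ * t ^ n := mul_le_mul_of_nonneg_right hle (by positivity)
      _ = (‖coeff p (w ^ m)‖ * t ^ p) * (‖coeff q w‖ * t ^ q) := by
          rw [← hpq, pow_add, norm_mul, mul_mul_mul_comm]
      _ ≤ C ^ m * C := mul_le_mul (ih p) (hw q) (by positivity) (pow_nonneg hC m)
      _ = C ^ (m + 1) := (pow_succ C m).symm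

lemma exists_norm_coeff_psComp_le (g w : PowerSeries K) (n : ℕ) :
    ∃ m ≤ n, ‖coeff n (psComp g w)‖ ≤ ‖coeff m g‖ * ‖coeff n (w ^ m)‖ := by
  obtain ⟨m, hm, hle⟩ := IsUltrametricDist.exists_norm_finsetSum_le_of_nonempty
    Finset.nonempty_range_add_one fun k => coeff k g * coeff n (w ^ k)
  exact ⟨m, Nat.lt_succ_iff.1 (Finset.mem_range.1 hm), by simpa [psComp] using hle⟩

lemma norm_coeff_psComp_mul_pow_le {g w : PowerSeries K} {s ρ B : ℝ} (hs : 0 ≤ s)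
    (hw : ∀ k, ‖coeff k w‖ * s ^ k ≤ ρ) (hg : ∀ m, ‖coeff m g‖ * ρ ^ m ≤ B) (n : ℕ) :
    ‖coeff n (psComp g w)‖ * s ^ n ≤ B := by
  obtain ⟨m, -, hm⟩ := exists_norm_coeff_psComp_le g w n
  calc ‖coeff n (psComp g w)‖ * s ^ n ≤ ‖coeff m g‖ * (‖coeff n (w ^ m)‖ * s ^ n) := by
        rw [← mul_assoc]; gcongr
    _ ≤ ‖coeff m g‖ * ρ ^ m := by gcongr; exact norm_coeff_pow_mul_pow_le hs hw m n
    _ ≤ B := hg m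

lemma gauss1_psComp_le {g w : PowerSeries K} {s ρ : ℝ} (hs : 0 ≤ s)
    (hw : ∀ k, ‖coeff k w‖ * s ^ k ≤ ρ)
    (hg : BddAbove (Set.range fun m => ‖coeff m g‖ * ρ ^ m)) :
    gauss1 s (psComp g w) ≤ gauss1 ρ g :=
  ciSup_le <| norm_coeff_psComp_mul_pow_le hs hw fun m => le_ciSup hg m

lemma memDisc_psComp {g w : PowerSeries K} {c s ρ : ℝ} (hc : 1 < c) (hs : 0 ≤ s)
    (hw : ∀ k, ‖coeff k w‖ * (c * s) ^ k ≤ c * ρ) (hg : MemDisc ρ g) :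
    MemDisc s (psComp g w) := by
  have hc0 : 0 < c := one_pos.trans hc
  refine tendsto_zero_of_le_mul_pow_sub (inv_nonneg.2 hc0.le) (inv_lt_one_of_one_lt₀ hc) hg
    (fun n => by positivity) fun n => ?_
  obtain ⟨m, hmn, hm⟩ := exists_norm_coeff_psComp_le g w n
  obtain ⟨k, rfl⟩ := Nat.exists_eq_add_of_le hmn
  refine ⟨m, hmn, ?_⟩
  have hs' : s ^ (m + k) = (c * s) ^ (m + k) * c⁻¹ ^ (m + k) := by
    rw [← mul_pow, mul_right_comm, mul_inv_cancel₀ hc0.ne', one_mul]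
  calc ‖coeff (m + k) (psComp g w)‖ * s ^ (m + k)
      ≤ ‖coeff m g‖ * ‖coeff (m + k) (w ^ m)‖ * s ^ (m + k) := by gcongr
    _ = ‖coeff m g‖ * (‖coeff (m + k) (w ^ m)‖ * (c * s) ^ (m + k)) * c⁻¹ ^ (m + k) := by
        rw [hs']; ring
    _ ≤ ‖coeff m g‖ * (c * ρ) ^ m * c⁻¹ ^ (m + k) := by
        gcongr; exact norm_coeff_pow_mul_pow_le (by positivity) hw m (m + k)
    _ = ‖coeff m g‖ * ρ ^ m * c⁻¹ ^ (m + k - m) := by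
        rw [Nat.add_sub_cancel_left, pow_add, mul_pow, inv_pow]
        field_simp

end Ultrametric

section GaussNorm

variable {K : Type*} [NormedField K]

lemma exists_norm_coeff_mul_pow_le_linear {w : PowerSeries K} {t : ℝ} (ht : 0 < t)
    (hw : BddAbove (Set.range fun k => ‖coeff k w‖ * t ^ k)) (hw0 : constantCoeff w = 0)
    (hw1 : coeff 1 w ≠ 0) :
    ∃ t₁, 0 < t₁ ∧ t₁ ≤ t ∧ ∀ r, 0 ≤ r → r ≤ t₁ → ∀ k, ‖coeff k w‖ * r ^ k ≤ ‖coeff 1 w‖ * r := by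
  obtain ⟨M, hM⟩ := hw
  have hM' : ∀ k, ‖coeff k w‖ * t ^ k ≤ M := fun k => hM (Set.mem_range_self k)
  have ha : 0 < ‖coeff 1 w‖ := norm_pos_iff.2 hw1
  have hM0 : 0 < M := (by positivity : 0 < ‖coeff 1 w‖ * t ^ 1).trans_le (hM' 1)
  refine ⟨min t (‖coeff 1 w‖ * t ^ 2 / M), by positivity, min_le_left _ _,
    fun r hr hrt k => ?_⟩
  have hr₁ : r ≤ t := hrt.trans (min_le_left _ _)
  have hr₂ : r * M ≤ ‖coeff 1 w‖ * t ^ 2 := (le_div_iff₀ hM0).1 (hrt.trans (min_le_right _ _))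
  match k with
  | 0 => simpa [hw0] using mul_nonneg ha.le hr
  | 1 => rw [pow_one]
  | k + 2 =>
    have hq : r / t ≤ 1 := (div_le_one ht).2 hr₁
    calc ‖coeff (k + 2) w‖ * r ^ (k + 2)
        = ‖coeff (k + 2) w‖ * t ^ (k + 2) * (r / t) ^ (k + 2) := by
          rw [div_pow, mul_assoc, mul_div_cancel₀ _ (by positivity)]
      _ ≤ M * (r / t) ^ 2 :=
          mul_le_mul (hM' _) (pow_le_pow_of_le_one (by positivity) hq (by omega))
            (by positivity) hM0.le
      _ = r * M * r / t ^ 2 := by ring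
      _ ≤ ‖coeff 1 w‖ * t ^ 2 * r / t ^ 2 := by gcongr
      _ = ‖coeff 1 w‖ * r := by field_simp

lemma gauss1_eq_of_forall_le {w : PowerSeries K} {r : ℝ} (j : ℕ)
    (h : ∀ k, ‖coeff k w‖ * r ^ k ≤ ‖coeff j w‖ * r ^ j) :
    gauss1 r w = ‖coeff j w‖ * r ^ j :=
  le_antisymm (ciSup_le h) (le_ciSup ⟨_, Set.forall_mem_range.2 h⟩ j)

end GaussNorm

theorem isometric_iso_of_small_discs_general {K : Type*} [NormedField K] [IsUltrametricDist K]
    (r₀ s₀ : ℝ) (hr₀ : 0 < r₀) (hs₀ : 0 < s₀)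
    (u v : PowerSeries K) (hu : MemDisc r₀ u) (hv : MemDisc s₀ v)
    (hu0 : PowerSeries.constantCoeff u = 0) (hv0 : PowerSeries.constantCoeff v = 0)
    (huv : psComp u v = PowerSeries.X) (hvu : psComp v u = PowerSeries.X) :
    ∃ r₁ : ℝ, 0 < r₁ ∧ r₁ ≤ r₀ ∧ ∀ r : ℝ, 0 < r → r ≤ r₁ →
      (∀ g : PowerSeries K, MemDisc (‖PowerSeries.coeff 1 u‖ * r) g →
        MemDisc r (psComp g u) ∧
        gauss1 r (psComp g u) = gauss1 (‖PowerSeries.coeff 1 u‖ * r) g) ∧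
      gauss1 (‖PowerSeries.coeff 1 u‖ * r) v = r ∧
      (∀ h : PowerSeries K, MemDisc r h →
        MemDisc (‖PowerSeries.coeff 1 u‖ * r) (psComp h v) ∧
        psComp (psComp h v) u = h) ∧
      (∀ g : PowerSeries K, MemDisc (‖PowerSeries.coeff 1 u‖ * r) g →
        psComp (psComp g u) v = g) := by
  have hcoeff : coeff 1 u * coeff 1 v = 1 := coeff_one_mul_coeff_one_of_psComp_eq_X huv
  have ha : 0 < ‖coeff 1 u‖ := norm_pos_iff.2 (left_ne_zero_of_mul_eq_one hcoeff)
  obtain ⟨tu, htu, htu₀, Hu⟩ := exists_norm_coeff_mul_pow_le_linear hr₀ hu.bddAbove_range hu0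
    (left_ne_zero_of_mul_eq_one hcoeff)
  obtain ⟨tv, htv, -, Hv⟩ := exists_norm_coeff_mul_pow_le_linear hs₀ hv.bddAbove_range hv0
    (right_ne_zero_of_mul_eq_one hcoeff)
  refine ⟨min (tu / 2) (tv / (2 * ‖coeff 1 u‖)), by positivity,
    (min_le_left _ _).trans (by linarith), fun r hr hr₁ => ?_⟩
  have h2r : 2 * r ≤ tu := by linarith [min_le_left (tu / 2) (tv / (2 * ‖coeff 1 u‖))]
  have h2ar : 2 * (‖coeff 1 u‖ * r) ≤ tv := by
    have := hr₁.trans (min_le_right _ _)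
    rw [le_div_iff₀ (by positivity)] at this
    linarith
  have hvu₁ : ‖coeff 1 v‖ * (‖coeff 1 u‖ * r) = r := by
    rw [← mul_assoc, mul_comm ‖_‖, ← norm_mul, hcoeff, norm_one, one_mul]
  have Hu₁ : ∀ k, ‖coeff k u‖ * r ^ k ≤ ‖coeff 1 u‖ * r := Hu r hr.le (by linarith)
  have Hu₂ : ∀ k, ‖coeff k u‖ * (2 * r) ^ k ≤ 2 * (‖coeff 1 u‖ * r) := fun k =>
    (Hu (2 * r) (by positivity) h2r k).trans_eq (by ring)
  have Hv₁ : ∀ k, ‖coeff k v‖ * (‖coeff 1 u‖ * r) ^ k ≤ r := fun k =>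
    (Hv _ (by positivity) (by linarith) k).trans_eq hvu₁
  have Hv₂ : ∀ k, ‖coeff k v‖ * (2 * (‖coeff 1 u‖ * r)) ^ k ≤ 2 * r := fun k =>
    (Hv _ (by positivity) h2ar k).trans_eq (by rw [mul_left_comm, hvu₁])
  refine ⟨fun g hg => ?_, ?_, fun h hh => ⟨memDisc_psComp one_lt_two (by positivity) Hv₂ hh,
    psComp_psComp_eq_self hu0 hv0 hvu h⟩, fun g _ => psComp_psComp_eq_self hv0 hu0 huv g⟩
  · have hgu : MemDisc r (psComp g u) := memDisc_psComp one_lt_two hr.le Hu₂ hg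
    refine ⟨hgu, le_antisymm (gauss1_psComp_le hr.le Hu₁ hg.bddAbove_range) ?_⟩
    calc gauss1 (‖coeff 1 u‖ * r) g
        = gauss1 (‖coeff 1 u‖ * r) (psComp (psComp g u) v) := by
          rw [psComp_psComp_eq_self hv0 hu0 huv]
      _ ≤ gauss1 r (psComp g u) := gauss1_psComp_le (by positivity) Hv₁ hgu.bddAbove_range
  · rw [gauss1_eq_of_forall_le 1 fun k => (Hv₁ k).trans_eq (by rw [pow_one, hvu₁]), pow_one,
      hvu₁]

/-- Let `K` be a complete non-archimedean field, `u ∈ K{r₀⁻¹z}` and `v ∈ K{s₀⁻¹z}` with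
`u(0) = v(0) = 0` and `u(v(z)) = v(u(z)) = z`. Then there is `r₁ ∈ (0, r₀]` such that for
every `r ∈ (0, r₁]`, precomposition with `u` (i.e. `g ↦ g∘u`) is an isometric isomorphism
`K{(|u'(0)|r)⁻¹z} → K{r⁻¹z}` whose inverse is precomposition with `v`, and moreover
`‖v‖` on the disc of radius `|u'(0)|·r` equals `r`. -/
theorem isometric_iso_of_small_discs {K : Type*} [NormedField K] [IsUltrametricDist K]
    [CompleteSpace K] (r₀ s₀ : ℝ) (hr₀ : 0 < r₀) (hs₀ : 0 < s₀)
    (u v : PowerSeries K) (hu : MemDisc r₀ u) (hv : MemDisc s₀ v)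
    (hu0 : PowerSeries.constantCoeff u = 0) (hv0 : PowerSeries.constantCoeff v = 0)
    (huv : psComp u v = PowerSeries.X) (hvu : psComp v u = PowerSeries.X) :
    ∃ r₁ : ℝ, 0 < r₁ ∧ r₁ ≤ r₀ ∧ ∀ r : ℝ, 0 < r → r ≤ r₁ →
      (∀ g : PowerSeries K, MemDisc (‖PowerSeries.coeff 1 u‖ * r) g →
        MemDisc r (psComp g u) ∧
        gauss1 r (psComp g u) = gauss1 (‖PowerSeries.coeff 1 u‖ * r) g) ∧
      gauss1 (‖PowerSeries.coeff 1 u‖ * r) v = r ∧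
      (∀ h : PowerSeries K, MemDisc r h →
        MemDisc (‖PowerSeries.coeff 1 u‖ * r) (psComp h v) ∧
        psComp (psComp h v) u = h) ∧
      (∀ g : PowerSeries K, MemDisc (‖PowerSeries.coeff 1 u‖ * r) g →
        psComp (psComp g u) v = g) :=
  isometric_iso_of_small_discs_general r₀ s₀ hr₀ hs₀ u v hu hv hu0 hv0 huv hvu
end

section
/- Let K ⊆ L be a field extension, n ≥ 0, f ∈ K⟦T₁,…,Tₙ⟧ a nonzero formal power series, and g ∈ L⟦T₁,…,Tₙ⟧. If the product f·g has all coefficients in K, then g has all coefficients in K, i.e. g ∈ K⟦T₁,…,Tₙ⟧. -/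
/-!
Choose a `K`-linear retraction `ρ : L → K` of the inclusion `K → L` (it exists since `K` is
a field) and apply it to `g` coefficientwise, giving `g₀ ∈ K⟦T⟧`. As `ρ` is `K`-linear it
commutes with multiplication by `f`, so `f g₀ = ρ(f g) = f g` once `f g` has coefficients
in `K`. Hence `f (g - g₀) = 0` in the domain `L⟦T⟧`, and `g = g₀`.
-/

namespace MvPowerSeries

variable {σ K L : Type*}

section CommSemiring

variable [CommSemiring K] [Semiring L] [Algebra K L]

def mapCoeffs (ρ : L →ₗ[K] K) (g : MvPowerSeries σ L) : MvPowerSeries σ K :=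
  fun d => ρ (coeff d g)

@[simp]
theorem coeff_mapCoeffs (ρ : L →ₗ[K] K) (g : MvPowerSeries σ L) (d : σ →₀ ℕ) :
    coeff d (mapCoeffs ρ g) = ρ (coeff d g) :=
  rfl

theorem mapCoeffs_map_mul (ρ : L →ₗ[K] K) (f : MvPowerSeries σ K) (g : MvPowerSeries σ L) :
    mapCoeffs ρ (map (algebraMap K L) f * g) = f * mapCoeffs ρ g := by
  classical
  ext d
  rw [coeff_mapCoeffs, coeff_mul, coeff_mul, map_sum]
  simp only [coeff_map, ← Algebra.smul_def, map_smul, coeff_mapCoeffs, smul_eq_mul]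

end CommSemiring

theorem map_algebraMap_ne_zero [Field K] [Semiring L] [Nontrivial L] [Algebra K L]
    {f : MvPowerSeries σ K} (hf : f ≠ 0) : map (algebraMap K L) f ≠ 0 := by
  obtain ⟨d, hd⟩ := (ne_zero_iff_exists_coeff_ne_zero f).mp hf
  exact (ne_zero_iff_exists_coeff_ne_zero _).mpr ⟨d, by simpa [coeff_map] using hd⟩

theorem coeff_mem_range_of_coeff_map_mul_mem_range [Field K] [Ring L] [IsDomain L]
    [Algebra K L] {f : MvPowerSeries σ K} (hf : f ≠ 0) {g : MvPowerSeries σ L}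
    (h : ∀ d, coeff d (map (algebraMap K L) f * g) ∈ Set.range (algebraMap K L)) (d : σ →₀ ℕ) :
    coeff d g ∈ Set.range (algebraMap K L) := by
  obtain ⟨ρ, hρ⟩ := (Algebra.linearMap K L).exists_leftInverse_of_injective
    (LinearMap.ker_eq_bot.mpr (algebraMap K L).injective)
  set g₀ := map (algebraMap K L) (mapCoeffs ρ g)
  have hmul : map (algebraMap K L) f * (g - g₀) = 0 := by
    ext e
    obtain ⟨k, hk⟩ := h e
    have hρk : ρ (algebraMap K L k) = k := LinearMap.congr_fun hρ k
    rw [mul_sub, map_sub, ← map_mul, ← mapCoeffs_map_mul, coeff_map, coeff_mapCoeffs, ← hk, hρk,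
      sub_self, map_zero]
  have hg : g = g₀ :=
    sub_eq_zero.mp ((mul_eq_zero.mp hmul).resolve_left (map_algebraMap_ne_zero hf))
  rw [hg, coeff_map]
  exact Set.mem_range_self _

end MvPowerSeries

/-- Let `K ⊆ L` be a field extension, `f ∈ K⟦T₁,…,Tₙ⟧` nonzero (viewed in `L⟦T⟧` via the
inclusion) and `g ∈ L⟦T₁,…,Tₙ⟧`. If all coefficients of `f·g` lie in `K`, then all
coefficients of `g` lie in `K`. -/
theorem coeff_mem_of_mul_coeff_mem {K L : Type*} [Field K] [Field L] [Algebra K L]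
    {n : ℕ} (f : MvPowerSeries (Fin n) K) (hf : f ≠ 0) (g : MvPowerSeries (Fin n) L)
    (h : ∀ d : Fin n →₀ ℕ,
      MvPowerSeries.coeff (R := L) d (MvPowerSeries.map (σ := Fin n) (algebraMap K L) f * g)
        ∈ Set.range (algebraMap K L)) :
    ∀ d : Fin n →₀ ℕ, MvPowerSeries.coeff (R := L) d g ∈ Set.range (algebraMap K L) :=
  MvPowerSeries.coeff_mem_range_of_coeff_map_mul_mem_range hf h
end

section
/- Let k be a field, X an abelian variety over k, and φ : X → X a group endomorphism whose minimal polynomial P_φ ∈ ℤ[t] is a product of cyclotomic polynomials. Then there exist n₀, m₀ ≥ 1 depending only on dim X such that (φ^{n₀} − id)^{m₀} = 0 in End(X). Moreover deg P_φ ≤ 4(dim X)². -/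
/-!
The minimal polynomial `P_φ` divides the characteristic polynomial of left multiplication by `φ`,
so `deg P_φ ≤ dim_ℚ A ≤ 4g² =: D`. Every cyclotomic factor `Φ_i` of `P_φ` then has `φ(i) ≤ D`, and
since `n ≤ 2 φ(n)²` for all `n ≥ 1`, every such `i` divides `n₀ := (2D²)!`. Hence each factor
divides `X ^ n₀ - 1`, and as there are at most `D` factors, `P_φ ∣ (X ^ n₀ - 1) ^ (D + 1)`.
-/

open Polynomial

namespace Nat

lemma prime_pow_le_totient_sq_of_odd {p : ℕ} (hp : p.Prime) (hodd : Odd p) (k : ℕ) :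
    p ^ k ≤ φ (p ^ k) ^ 2 := by
  rcases k.eq_zero_or_pos with rfl | hk
  · simp
  have hp3 : 3 ≤ p := hp.two_le.lt_of_ne (by rintro rfl; exact absurd hodd (by decide))
  have hsq : p ≤ (p - 1) ^ 2 := by
    obtain ⟨r, rfl⟩ : ∃ r, p = r + 3 := ⟨p - 3, by omega⟩
    rw [show r + 3 - 1 = r + 2 by omega]
    nlinarith
  rw [totient_prime_pow hp hk]
  calc p ^ k = p ^ (k - 1) * p := by rw [← pow_succ, Nat.sub_add_cancel hk]
    _ ≤ p ^ (k - 1) * p ^ (k - 1) * (p - 1) ^ 2 :=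
        Nat.mul_le_mul (Nat.le_mul_of_pos_right _ (pow_pos hp.pos _)) hsq
    _ = (p ^ (k - 1) * (p - 1)) ^ 2 := by ring

lemma two_pow_le_two_mul_totient_sq (k : ℕ) : 2 ^ k ≤ 2 * φ (2 ^ k) ^ 2 := by
  rcases k.eq_zero_or_pos with rfl | hk
  · simp
  rw [totient_prime_pow prime_two hk, show 2 - 1 = 1 from rfl, mul_one]
  calc 2 ^ k = 2 * 2 ^ (k - 1) := by rw [← _root_.pow_succ', Nat.sub_one_add_one hk.ne']
    _ ≤ 2 * (2 ^ (k - 1)) ^ 2 := Nat.mul_le_mul_left _ (Nat.le_self_pow two_ne_zero _)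

lemma le_totient_sq_of_odd {n : ℕ} (hn : Odd n) : n ≤ φ n ^ 2 := by
  induction n using recOnPrimePow with
  | zero => exact absurd hn (by decide)
  | one => simp
  | prime_pow_mul a p k hp hpa hk ih =>
    have hcop : Coprime (p ^ k) a := ((hp.coprime_iff_not_dvd).2 hpa).pow_left k
    have hpodd : Odd p := (odd_pow_iff hk.ne').mp (Odd.of_mul_left hn)
    rw [totient_mul hcop, mul_pow]
    exact Nat.mul_le_mul (prime_pow_le_totient_sq_of_odd hp hpodd k) (ih (Odd.of_mul_right hn))

lemma le_two_mul_totient_sq {n : ℕ} (hn : n ≠ 0) : n ≤ 2 * φ n ^ 2 := by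
  obtain ⟨k, m, hm, rfl⟩ := exists_eq_two_pow_mul_odd hn
  rw [totient_mul ((coprime_two_left.mpr hm).pow_left k), mul_pow, ← mul_assoc]
  exact Nat.mul_le_mul (two_pow_le_two_mul_totient_sq k) (le_totient_sq_of_odd hm)

lemma dvd_factorial_of_totient_le_s16 {i D : ℕ} (hi : 0 < i) (h : φ i ≤ D) : i ∣ (2 * D ^ 2)! :=
  dvd_factorial hi ((le_two_mul_totient_sq hi.ne').trans (by gcongr))

end Nat

lemma Multiset.card_le_sum_totient {s : Multiset ℕ} (hs : ∀ i ∈ s, 0 < i) :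
    card s ≤ (s.map Nat.totient).sum := by
  simpa using card_nsmul_le_sum (s := s.map Nat.totient) (a := 1)
    (by simpa [Nat.one_le_iff_ne_zero] using fun i hi => (hs i hi).ne')

namespace Polynomial

variable {R : Type*} [CommRing R]

lemma natDegree_multiset_prod_cyclotomic [Nontrivial R] (s : Multiset ℕ) :
    (s.map fun i => cyclotomic i R).prod.natDegree = (s.map Nat.totient).sum := by
  rw [natDegree_multiset_prod_of_monic _ (by simp [cyclotomic.monic]), Multiset.map_map]
  simp [natDegree_cyclotomic]

lemma multiset_prod_cyclotomic_dvd_X_pow_sub_one_pow {s : Multiset ℕ} {n : ℕ}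
    (hdvd : ∀ i ∈ s, i ∣ n) :
    (s.map fun i => cyclotomic i R).prod ∣ (X ^ n - 1) ^ Multiset.card s :=
  calc (s.map fun i => cyclotomic i R).prod ∣ (s.map fun _ => (X ^ n - 1 : R[X])).prod :=
        Multiset.prod_dvd_prod_of_dvd _ _ fun i hi =>
          (cyclotomic.dvd_X_pow_sub_one i R).trans (dvd_pow_sub_one_of_dvd (hdvd i hi))
    _ = (X ^ n - 1) ^ Multiset.card s := by rw [Multiset.map_const', Multiset.prod_replicate]

lemma multiset_prod_cyclotomic_dvd_X_pow_factorial_sub_one_pow [Nontrivial R]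
    {s : Multiset ℕ} {D : ℕ} (hs : ∀ i ∈ s, 0 < i)
    (hdeg : (s.map fun i => cyclotomic i R).prod.natDegree ≤ D) :
    (s.map fun i => cyclotomic i R).prod ∣ (X ^ (2 * D ^ 2).factorial - 1) ^ D := by
  rw [natDegree_multiset_prod_cyclotomic] at hdeg
  have htot : ∀ i ∈ s, Nat.totient i ≤ D := fun i hi =>
    (Multiset.le_sum_of_mem (Multiset.mem_map_of_mem _ hi)).trans hdeg
  exact (multiset_prod_cyclotomic_dvd_X_pow_sub_one_pow fun i hi =>
      Nat.dvd_factorial_of_totient_le_s16 (hs i hi) (htot i hi)).trans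
    (pow_dvd_pow _ ((Multiset.card_le_sum_totient hs).trans hdeg))

end Polynomial

/-- **Unipotence bound for endomorphisms of abelian varieties with cyclotomic minimal
polynomial.** Abelian varieties are not available in Mathlib, so the endomorphism algebra
`End(X)_ℚ` of a `g`-dimensional abelian variety `X` is modelled as a finite-dimensional
`ℚ`-algebra `A` with `dim_ℚ A ≤ 4g²` (which holds for abelian varieties), and a group
endomorphism `φ` of `X` as an element of `A`. If the minimal polynomial `P_φ` of `φ` is a
product of cyclotomic polynomials, then `(φ^{n₀} − 1)^{m₀} = 0` where `n₀, m₀ ≥ 1` depend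
only on `g`; moreover `deg P_φ ≤ 4g²`. -/
theorem cyclotomic_minpoly_unipotent (g : ℕ) :
    ∃ n₀ m₀ : ℕ, 1 ≤ n₀ ∧ 1 ≤ m₀ ∧
      ∀ (A : Type) [Ring A] [Algebra ℚ A] [FiniteDimensional ℚ A],
        Module.finrank ℚ A ≤ 4 * g ^ 2 →
        ∀ φ : A,
          (∃ s : Multiset ℕ, (∀ i ∈ s, 0 < i) ∧
            minpoly ℚ φ = (s.map fun i => Polynomial.cyclotomic i ℚ).prod) →
          (φ ^ n₀ - 1) ^ m₀ = 0 ∧ (minpoly ℚ φ).natDegree ≤ 4 * g ^ 2 := by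
  refine ⟨(2 * (4 * g ^ 2) ^ 2).factorial, 4 * g ^ 2 + 1, Nat.factorial_pos _,
    Nat.le_add_left 1 _, ?_⟩
  intro A _ _ _ hdim φ ⟨s, hs, hmin⟩
  have hdeg : (minpoly ℚ φ).natDegree ≤ 4 * g ^ 2 := (minpoly.natDegree_le φ).trans hdim
  refine ⟨?_, hdeg⟩
  have hdvd : minpoly ℚ φ ∣ (X ^ (2 * (4 * g ^ 2) ^ 2).factorial - 1) ^ (4 * g ^ 2 + 1) :=
    hmin ▸ (multiset_prod_cyclotomic_dvd_X_pow_factorial_sub_one_pow hs (hmin ▸ hdeg)).trans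
      (pow_dvd_pow _ (Nat.le_succ _))
  simpa using aeval_eq_zero_of_dvd_aeval_eq_zero hdvd (minpoly.aeval ℚ φ)
end

section
/- Let k be a field, X an abelian variety over k, and φ : X → X a group endomorphism with minimal polynomial P_φ. For any n ≥ 1, P_φ has a cyclotomic polynomial as a factor if and only if P_{φⁿ} (the minimal polynomial of φⁿ) has a cyclotomic polynomial as a factor. Equivalently, P_φ has a cyclotomic factor if and only if φᵐ − id is not surjective for some m ≥ 1. -/
/-!
For `ψ` integral over a field, `aeval ψ p` is a unit exactly when `p` is coprime to the minimal
polynomial of `ψ`. Over `ℚ`, `X ^ m - 1` is the product of the irreducible cyclotomic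
polynomials `Φ_d` with `d ∣ m`, so `ψ ^ m - 1` fails to be a unit for some `m ≥ 1` iff some `Φ_d`
divides `minpoly ℚ ψ`. That criterion is insensitive to replacing `φ` by `φ ^ n`, since
`φ ^ m - 1` divides `φ ^ (n * m) - 1` through a commuting geometric sum.
-/

open Polynomial

theorem isUnit_sub_one_of_isUnit_pow_sub_one {R : Type*} [Ring R] {x : R} {n : ℕ}
    (h : IsUnit (x ^ n - 1)) : IsUnit (x - 1) := by
  have hcomm : Commute (x - 1) (∑ i ∈ Finset.range n, x ^ i) :=
    (mul_geom_sum x n).trans (geom_sum_mul x n).symm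
  rw [← mul_geom_sum, hcomm.isUnit_mul_iff] at h
  exact h.1

theorem isUnit_aeval_iff_isCoprime_minpoly {K A : Type*} [Field K] [Ring A] [Algebra K A]
    {x : A} (hx : IsIntegral K x) (p : K[X]) :
    IsUnit (aeval x p) ↔ IsCoprime p (minpoly K x) := by
  constructor
  · intro hp
    -- A common irreducible factor `q` would make `minpoly K x / q` vanish at `x`.
    refine isCoprime_of_irreducible_dvd (fun h => minpoly.ne_zero hx h.2) ?_
    rintro q hq ⟨f, rfl⟩ ⟨e, he⟩
    have hqe : aeval x q * aeval x e = 0 := by rw [← map_mul, ← he, minpoly.aeval]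
    have hq_unit : IsUnit (aeval x q) :=
      (((Commute.all q f).map (aeval x)).isUnit_mul_iff.mp (by rwa [← map_mul])).1
    obtain ⟨t, ht⟩ : minpoly K x ∣ e := minpoly.dvd K x (hq_unit.mul_right_eq_zero.mp hqe)
    have he0 : e ≠ 0 := by rintro rfl; exact minpoly.ne_zero hx (by simpa using he)
    refine hq.not_isUnit (IsUnit.of_mul_eq_one t (mul_left_cancel₀ he0 ?_))
    rw [mul_one, ← mul_assoc, mul_comm e q, ← he, ← ht]
  · rintro ⟨a, b, hab⟩
    have hap : aeval x a * aeval x p = 1 := by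
      simpa [minpoly.aeval] using congrArg (aeval x) hab
    exact (((Commute.all a p).map (aeval x)).isUnit_mul_iff.mp (hap ▸ isUnit_one)).2

theorem exists_cyclotomic_dvd_iff_exists_not_isCoprime (p : ℚ[X]) :
    (∃ i : ℕ, 1 ≤ i ∧ cyclotomic i ℚ ∣ p) ↔ ∃ m : ℕ, 1 ≤ m ∧ ¬ IsCoprime (X ^ m - 1) p := by
  constructor
  · rintro ⟨i, hi, hdvd⟩
    exact ⟨i, hi, fun h => (cyclotomic.irreducible_rat hi).not_isUnit
      (h.isUnit_of_dvd' (cyclotomic.dvd_X_pow_sub_one i ℚ) hdvd)⟩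
  · rintro ⟨m, hm, hnc⟩
    rw [← prod_cyclotomic_eq_X_pow_sub_one hm ℚ] at hnc
    obtain ⟨i, hi, hic⟩ : ∃ i ∈ m.divisors, ¬ IsCoprime (cyclotomic i ℚ) p := by
      by_contra! hall
      exact hnc (IsCoprime.prod_left hall)
    have hi_pos : 0 < i := Nat.pos_of_mem_divisors hi
    exact ⟨i, hi_pos, not_not.mp fun hndvd =>
      hic ((cyclotomic.irreducible_rat hi_pos).coprime_iff_not_dvd.mpr hndvd)⟩

theorem exists_cyclotomic_dvd_minpoly_iff {A : Type*} [Ring A] [Algebra ℚ A] {ψ : A}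
    (hψ : IsIntegral ℚ ψ) :
    (∃ i : ℕ, 1 ≤ i ∧ cyclotomic i ℚ ∣ minpoly ℚ ψ) ↔ ∃ m : ℕ, 1 ≤ m ∧ ¬ IsUnit (ψ ^ m - 1) := by
  simp only [exists_cyclotomic_dvd_iff_exists_not_isCoprime,
    ← isUnit_aeval_iff_isCoprime_minpoly hψ, map_sub, map_pow, aeval_X, map_one]

/-- **Cyclotomic factors of minimal polynomials of endomorphisms of abelian varieties.**
Abelian varieties are not available in Mathlib, so the endomorphism algebra `End(X)_ℚ` of
an abelian variety `X` over a field `k` is modelled as a finite-dimensional `ℚ`-algebra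
`A`, a group endomorphism `φ` as an element of `A`, and surjectivity of an endomorphism
of `X` as invertibility in `End(X)_ℚ = A`. Then for every `n ≥ 1`: the minimal polynomial
`P_φ` has a cyclotomic factor iff `P_{φⁿ}` has a cyclotomic factor, and this happens iff
`φᵐ − 1` is not surjective (not a unit of `A`) for some `m ≥ 1`. -/
theorem cyclotomic_factor_minpoly_pow {A : Type*} [Ring A] [Algebra ℚ A]
    [FiniteDimensional ℚ A] (φ : A) (n : ℕ) (hn : 1 ≤ n) :
    ((∃ i : ℕ, 1 ≤ i ∧ Polynomial.cyclotomic i ℚ ∣ minpoly ℚ φ) ↔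
      (∃ i : ℕ, 1 ≤ i ∧ Polynomial.cyclotomic i ℚ ∣ minpoly ℚ (φ ^ n))) ∧
    ((∃ i : ℕ, 1 ≤ i ∧ Polynomial.cyclotomic i ℚ ∣ minpoly ℚ φ) ↔
      (∃ m : ℕ, 1 ≤ m ∧ ¬ IsUnit (φ ^ m - 1))) := by
  have hφ : IsIntegral ℚ φ := Algebra.IsIntegral.isIntegral φ
  refine ⟨?_, exists_cyclotomic_dvd_minpoly_iff hφ⟩
  rw [exists_cyclotomic_dvd_minpoly_iff hφ, exists_cyclotomic_dvd_minpoly_iff (hφ.pow n)]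
  constructor
  · rintro ⟨m, hm, hu⟩
    refine ⟨m, hm, fun h => hu (isUnit_sub_one_of_isUnit_pow_sub_one (n := n) ?_)⟩
    rwa [← pow_mul, mul_comm, pow_mul]
  · rintro ⟨m, hm, hu⟩
    exact ⟨n * m, Nat.mul_pos hn hm, by rwa [pow_mul]⟩
end

section
/- Let K be a number field and let X, f, g, Y be as follows: X a projective variety over K, f, g : X → X surjective morphisms over K, Y ⊆ X a closed subvariety. Suppose (1) f∘g = g∘f, (2) f(g(Y)) = Y, (3) Y ∩ gⁿ(Y) ⊊ Y for all n ≥ 1, and (4) Y(K) is Zariski dense in Y. Then for every s ≥ 0, the set (f^{−s−1}(Y) \ ⋃_{0≤i≤s} f^{−i}(Y))(K) is non-empty; in particular the non-invariant Preimages Question has a negative answer for (X, f, Y). The key identity used is fᵐ(gⁿ(Y)) = g^{n−m}(Y) for all n ≥ m ≥ 0. -/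
/-!
Put `Z = g^{s+1}(Y)`. By the key identity `f^{s+1}(Z) = Y`, so `Z ⊆ f^{-s-1}(Y)`. If `Z` were
covered by the closed sets `f^{-i}(Y)`, `i ≤ s`, then, being irreducible, it would lie in one
of them, i.e. `gⁿ(Y) ⊆ Y` with `n = s + 1 - i ≥ 1`. The chain `Y ⊇ gⁿ(Y) ⊇ g^{2n}(Y) ⊇ ⋯` of
closed sets stabilises in the Noetherian space `X`, and applying `f^{nk}` to
`g^{n(k+1)}(Y) = g^{nk}(Y)` gives `gⁿ(Y) = Y`, contrary to (3). So `Z` minus that union is a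
nonempty open subset of `Z`, and it contains a rational point because the rational points of
`Z = g^{s+1}(Y)` are dense in `Z`, being the image of those of `Y`.
-/

open Function Set TopologicalSpace

theorem image_iterate_image_iterate_of_commute {α : Type*} {f g : α → α} {Y : Set α}
    (hfg : Function.Commute f g) (hY : f '' (g '' Y) = Y) {m n : ℕ} (hmn : m ≤ n) :
    f^[m] '' (g^[n] '' Y) = g^[n - m] '' Y := by
  have hfgY : (f ∘ g)^[m] '' Y = Y := by
    induction m with
    | zero => simp
    | succ m ih => rw [iterate_succ, image_comp, image_comp, hY, ih (by omega)]
  have hsplit : f^[m] ∘ g^[n] = g^[n - m] ∘ (f ∘ g)^[m] := by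
    rw [← Nat.sub_add_cancel hmn, iterate_add, ← comp_assoc,
      (hfg.iterate_iterate m (n - m)).comp_eq, comp_assoc, hfg.comp_iterate, Nat.add_sub_cancel]
  rw [← image_comp, hsplit, image_comp, hfgY]

section Topology

variable {X : Type*} [TopologicalSpace X]

theorem IsClosedMap.iterate {g : X → X} (hg : IsClosedMap g) : ∀ n, IsClosedMap g^[n]
  | 0 => IsClosedMap.id
  | n + 1 => (hg.iterate n).comp hg

theorem IsClosedMap.exists_image_iterate_succ_eq [NoetherianSpace X] {g : X → X}
    (hg : IsClosedMap g) {Y : Set X} (hY : IsClosed Y) (hgY : g '' Y ⊆ Y) :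
    ∃ k, g^[k + 1] '' Y = g^[k] '' Y := by
  let C : ℕ → Closeds X := fun k => ⟨g^[k] '' Y, hg.iterate k _ hY⟩
  obtain ⟨_, ⟨k, rfl⟩, hmin⟩ :=
    exists_minimal_of_wellFoundedLT (· ∈ range C) ⟨C 0, 0, rfl⟩
  have hsucc : C (k + 1) ≤ C k := by
    change g^[k + 1] '' Y ⊆ g^[k] '' Y
    rw [iterate_succ, image_comp]
    exact image_mono hgY
  exact ⟨k, congrArg SetLike.coe (le_antisymm hsucc (hmin ⟨k + 1, rfl⟩ hsucc))⟩

theorem image_iterate_eq_of_image_iterate_subset [NoetherianSpace X] {f g : X → X}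
    (hfg : Function.Commute f g) (hg : IsClosedMap g) {Y : Set X} (hY : IsClosed Y)
    (hfgY : f '' (g '' Y) = Y) {n : ℕ} (hn : g^[n] '' Y ⊆ Y) : g^[n] '' Y = Y := by
  obtain ⟨k, hk⟩ := (hg.iterate n).exists_image_iterate_succ_eq hY hn
  rw [← iterate_mul, ← iterate_mul] at hk
  have hfk := congrArg (f^[n * k] '' ·) hk
  rwa [image_iterate_image_iterate_of_commute hfg hfgY (Nat.mul_le_mul_left n k.le_succ),
    image_iterate_image_iterate_of_commute hfg hfgY le_rfl, Nat.sub_self, iterate_zero,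
    image_id, Nat.mul_succ, Nat.add_sub_cancel_left] at hfk

theorem IsIrreducible.exists_subset_of_subset_biUnion {ι : Type*} {Z : Set X}
    (hZ : IsIrreducible Z) {s : Finset ι} {C : ι → Set X} (hC : ∀ i ∈ s, IsClosed (C i))
    (hZC : Z ⊆ ⋃ i ∈ s, C i) : ∃ i ∈ s, Z ⊆ C i := by
  classical
  obtain ⟨_, hz, hZz⟩ := isIrreducible_iff_sUnion_isClosed.mp hZ (s.image C)
    (by simpa using hC) (by simpa [sUnion_image] using hZC)
  obtain ⟨i, hi, rfl⟩ := Finset.mem_image.mp hz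
  exact ⟨i, hi, hZz⟩

theorem image_subset_closure_image_inter {g : X → X} (hg : Continuous g) {P Y : Set X}
    (hgP : MapsTo g P P) (hY : Y ⊆ closure (Y ∩ P)) : g '' Y ⊆ closure (g '' Y ∩ P) :=
  calc g '' Y ⊆ g '' closure (Y ∩ P) := image_mono hY
    _ ⊆ closure (g '' (Y ∩ P)) := image_closure_subset_closure_image hg
    _ ⊆ closure (g '' Y ∩ P) :=
      closure_mono (subset_inter (image_mono inter_subset_left)
        (hgP.mono_left inter_subset_right).image_subset)

end Topology

theorem gpiq_counterexample_recipe_general {X : Type*} [TopologicalSpace X]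
    [TopologicalSpace.NoetherianSpace X] (pts : Set X) (f g : X → X)
    (hfc : Continuous f) (hgc : Continuous g)
    (hgcl : IsClosedMap g)
    (hgpts : MapsTo g pts pts)
    (Y : Set X) (hYcl : IsClosed Y) (hYirr : IsIrreducible Y)
    (h1 : f ∘ g = g ∘ f) (h2 : f '' (g '' Y) = Y)
    (h3 : ∀ n : ℕ, 1 ≤ n → Y ∩ g^[n] '' Y ⊂ Y)
    (h4 : Y ⊆ closure (Y ∩ pts)) :
    (∀ n m : ℕ, m ≤ n → f^[m] '' (g^[n] '' Y) = g^[n - m] '' Y) ∧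
    ∀ s : ℕ,
      (((f^[s + 1] ⁻¹' Y) \ ⋃ i ∈ Finset.range (s + 1), f^[i] ⁻¹' Y) ∩ pts).Nonempty := by
  have hfg : Function.Commute f g := congrFun h1
  have key {m n : ℕ} (hmn : m ≤ n) := image_iterate_image_iterate_of_commute hfg h2 hmn
  refine ⟨fun _ _ => key, fun s => ?_⟩
  set Z := g^[s + 1] '' Y
  set U := ⋃ i ∈ Finset.range (s + 1), f^[i] ⁻¹' Y
  have hUcl : IsClosed U := isClosed_biUnion_finset fun i _ => hYcl.preimage (hfc.iterate i)
  have hZ : Z ⊆ f^[s + 1] ⁻¹' Y :=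
    image_subset_iff.mp (by rw [key le_rfl, Nat.sub_self, iterate_zero, image_id])
  have hZirr : IsIrreducible Z := hYirr.image _ (hgc.iterate _).continuousOn
  have hZU : ¬ Z ⊆ U := by
    intro hZU
    obtain ⟨i, hi, hZi⟩ := hZirr.exists_subset_of_subset_biUnion
      (fun i _ => hYcl.preimage (hfc.iterate i)) hZU
    have hi : i < s + 1 := Finset.mem_range.mp hi
    have hsub : g^[s + 1 - i] '' Y ⊆ Y := key hi.le ▸ image_subset_iff.mpr hZi
    refine (h3 (s + 1 - i) (by omega)).ne ?_
    rw [image_iterate_eq_of_image_iterate_subset hfg hgcl hYcl h2 hsub, inter_self]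
  obtain ⟨z, hzZ, hzU⟩ := not_subset.mp hZU
  obtain ⟨p, ⟨hpZ, hp⟩, hpU⟩ := (closure_inter_open_nonempty_iff hUcl.isOpen_compl).mp
    ⟨z, image_subset_closure_image_inter (hgc.iterate _) (hgpts.iterate _) h4 hzZ, hzU⟩
  exact ⟨p, ⟨hZ hpZ, hpU⟩, hp⟩

/-- **Recipe for counterexamples to the non-invariant Preimages Question.**
Since projective varieties over a number field are not available in Mathlib, a projective
variety `X` over `K` is modelled by its underlying (Noetherian) Zariski topological space
together with its set `pts` of `K`-rational points, and the surjective morphisms `f, g`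
by continuous, surjective, closed maps with finite fibres (finite surjective morphisms)
preserving rational points. `Y` is a closed subvariety, i.e. an irreducible closed set.
Assume (1) `f∘g = g∘f`, (2) `f(g(Y)) = Y`, (3) `Y ∩ gⁿ(Y) ⊊ Y` for all `n ≥ 1`, and
(4) `Y(K)` is Zariski dense in `Y`. Then the key identity `fᵐ(gⁿ(Y)) = g^{n−m}(Y)` holds
for all `n ≥ m ≥ 0`, and for every `s ≥ 0` the set
`(f^{−s−1}(Y) \ ⋃_{0 ≤ i ≤ s} f^{−i}(Y))(K)` is non-empty — a negative answer to the
non-invariant Preimages Question. -/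
theorem gpiq_counterexample_recipe {X : Type*} [TopologicalSpace X]
    [TopologicalSpace.NoetherianSpace X] (pts : Set X) (f g : X → X)
    (hfc : Continuous f) (hgc : Continuous g)
    (hfs : Surjective f) (hgs : Surjective g)
    (hfcl : IsClosedMap f) (hgcl : IsClosedMap g)
    (hffin : ∀ x : X, (f ⁻¹' {x}).Finite) (hgfin : ∀ x : X, (g ⁻¹' {x}).Finite)
    (hfpts : MapsTo f pts pts) (hgpts : MapsTo g pts pts)
    (Y : Set X) (hYcl : IsClosed Y) (hYirr : IsIrreducible Y)
    (h1 : f ∘ g = g ∘ f) (h2 : f '' (g '' Y) = Y)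
    (h3 : ∀ n : ℕ, 1 ≤ n → Y ∩ g^[n] '' Y ⊂ Y)
    (h4 : Y ⊆ closure (Y ∩ pts)) :
    (∀ n m : ℕ, m ≤ n → f^[m] '' (g^[n] '' Y) = g^[n - m] '' Y) ∧
    ∀ s : ℕ,
      (((f^[s + 1] ⁻¹' Y) \ ⋃ i ∈ Finset.range (s + 1), f^[i] ⁻¹' Y) ∩ pts).Nonempty :=
  gpiq_counterexample_recipe_general pts f g hfc hgc hgcl hgpts Y hYcl hYirr h1 h2 h3 h4
end
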